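/- arXiv:2605.19513 — 3 statements merged into one kernel-verified Lean document; each statement's English description precedes it below -/
import Mathlib

section
/- Let R be a linearly ordered abelian group and X a set with an R-valued metric d₁ on a finite set X₁ and d₂ on a finite set X₂, agreeing on X = X₁ ∩ X₂, with X nonempty. Define d∪ on X₁ ∪ X₂ by: d∪(a,b) = dᵢ(a,b) when a,b ∈ Xᵢ, and d∪(a,b) = min over c ∈ X of (d₁(a,c) + d₂(c,b)) when a ∈ X₁ \ X and b ∈ X₂ \ X (symmetrically for the other order). Then d∪ is an R-valued metric on X₁ ∪ X₂ extending d₁ and d₂. -/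
/-! Call `d` an amalgam of `A` and `B` if it is a metric on each piece and every distance
`d a b` from `a ∈ A` to `b ∈ B` is the least value of `d a c + d c b` over the overlap
`c ∈ A ∩ B`. An amalgam is a metric on `A ∪ B`: a cross distance is positive because the
route to `b` must leave `a` for a point of the overlap, and in the triangle inequality any
path that crosses between the pieces can be rerouted through optimal overlap points, after
which only the triangle inequalities of the two pieces are needed. -/

def IsMetricOn {X R : Type*} [AddCommGroup R] [LinearOrder R] [IsOrderedAddMonoid R] (d : X → X → R) (S : Set X) :
    Prop :=
  (∀ x ∈ S, ∀ y ∈ S, (d x y = 0 ↔ x = y)) ∧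
  (∀ x ∈ S, ∀ y ∈ S, d x y = d y x) ∧
  (∀ x ∈ S, ∀ y ∈ S, ∀ z ∈ S, d x z ≤ d x y + d y z)

section

variable {X R : Type*} [AddCommGroup R] [LinearOrder R] [IsOrderedAddMonoid R]
  {d d' : X → X → R} {S T A B : Set X}

theorem IsMetricOn.congr (h : IsMetricOn d S) (hd : ∀ a ∈ S, ∀ b ∈ S, d' a b = d a b) :
    IsMetricOn d' S := by
  obtain ⟨hzero, hsymm, htri⟩ := h
  refine ⟨fun x hx y hy => ?_, fun x hx y hy => ?_, fun x hx y hy z hz => ?_⟩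
  · rw [hd x hx y hy]; exact hzero x hx y hy
  · rw [hd x hx y hy, hd y hy x hx]; exact hsymm x hx y hy
  · rw [hd x hx z hz, hd x hx y hy, hd y hy z hz]; exact htri x hx y hy z hz

theorem IsMetricOn.nonneg (h : IsMetricOn d S) {x y : X} (hx : x ∈ S) (hy : y ∈ S) :
    0 ≤ d x y := by
  obtain ⟨hzero, hsymm, htri⟩ := h
  have : 0 ≤ d x y + d x y := by
    simpa [(hzero x hx x hx).2 rfl, hsymm y hy x hx] using htri x hx y hy x hx
  by_contra! hneg
  exact (add_neg hneg hneg).not_ge this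

theorem IsMetricOn.pos_of_ne (h : IsMetricOn d S) {x y : X} (hx : x ∈ S) (hy : y ∈ S)
    (hxy : x ≠ y) : 0 < d x y :=
  (h.nonneg hx hy).lt_of_ne fun h0 => hxy ((h.1 x hx y hy).1 h0.symm)

theorem IsMetricOn.isLeast_add_of_left_mem (h : IsMetricOn d S) (hTS : T ⊆ S) {a b : X}
    (ha : a ∈ T) (hb : b ∈ S) : IsLeast ((fun c => d a c + d c b) '' T) (d a b) :=
  ⟨⟨a, ha, by simp [(h.1 a (hTS ha) a (hTS ha)).2 rfl]⟩,
    Set.forall_mem_image.2 fun _ hc => h.2.2 a (hTS ha) _ (hTS hc) b hb⟩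

theorem IsMetricOn.isLeast_add_of_right_mem (h : IsMetricOn d S) (hTS : T ⊆ S) {a b : X}
    (ha : a ∈ S) (hb : b ∈ T) : IsLeast ((fun c => d a c + d c b) '' T) (d a b) :=
  ⟨⟨b, hb, by simp [(h.1 b (hTS hb) b (hTS hb)).2 rfl]⟩,
    Set.forall_mem_image.2 fun _ hc => h.2.2 a ha _ (hTS hc) b (hTS hb)⟩

structure IsAmalgam (d : X → X → R) (A B : Set X) : Prop where
  metricOn_left : IsMetricOn d A
  metricOn_right : IsMetricOn d B
  comm : ∀ a ∈ A, ∀ b ∈ B, d a b = d b a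
  isLeast : ∀ a ∈ A, ∀ b ∈ B, IsLeast ((fun c => d a c + d c b) '' (A ∩ B)) (d a b)

namespace IsAmalgam

theorem of_diff (hA : IsMetricOn d A) (hB : IsMetricOn d B)
    (hdiff : ∀ a ∈ A \ B, ∀ b ∈ B \ A,
      d a b = d b a ∧ IsLeast ((fun c => d a c + d c b) '' (A ∩ B)) (d a b)) :
    IsAmalgam d A B := by
  have hcross : ∀ a ∈ A, ∀ b ∈ B,
      d a b = d b a ∧ IsLeast ((fun c => d a c + d c b) '' (A ∩ B)) (d a b) := by
    intro a ha b hb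
    by_cases haB : a ∈ B
    · exact ⟨hB.2.1 a haB b hb,
        hB.isLeast_add_of_left_mem Set.inter_subset_right ⟨ha, haB⟩ hb⟩
    by_cases hbA : b ∈ A
    · exact ⟨hA.2.1 a ha b hbA,
        hA.isLeast_add_of_right_mem Set.inter_subset_left ha ⟨hbA, hb⟩⟩
    exact hdiff a ⟨ha, haB⟩ b ⟨hb, hbA⟩
  exact ⟨hA, hB, fun a ha b hb => (hcross a ha b hb).1, fun a ha b hb => (hcross a ha b hb).2⟩

theorem swap (h : IsAmalgam d A B) : IsAmalgam d B A := by
  refine ⟨h.metricOn_right, h.metricOn_left, fun b hb a ha => (h.comm a ha b hb).symm,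
    fun b hb a ha => ?_⟩
  have hroute : ∀ c ∈ A ∩ B, d a c + d c b = d b c + d c a := fun c hc => by
    rw [h.metricOn_left.2.1 a ha c hc.1, h.metricOn_right.2.1 c hc.2 b hb, add_comm]
  rw [← h.comm a ha b hb, Set.inter_comm, ← Set.image_congr hroute]
  exact h.isLeast a ha b hb

theorem eq_zero_iff (h : IsAmalgam d A B) {a b : X} (ha : a ∈ A) (hb : b ∈ B) :
    d a b = 0 ↔ a = b := by
  by_cases haB : a ∈ B
  · exact h.metricOn_right.1 a haB b hb
  obtain ⟨c, hc, hcab⟩ := (h.isLeast a ha b hb).1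
  have hpos : 0 < d a b := by
    rw [← hcab]
    exact add_pos_of_pos_of_nonneg
      (h.metricOn_left.pos_of_ne ha hc.1 fun hac => haB (hac ▸ hc.2))
      (h.metricOn_right.nonneg hc.2 hb)
  exact ⟨fun h0 => absurd h0 hpos.ne', fun hab => absurd (hab ▸ hb) haB⟩

theorem triangle_of_ends_mem_left_right (h : IsAmalgam d A B) {x y z : X} (hx : x ∈ A)
    (hy : y ∈ A ∪ B) (hz : z ∈ B) : d x z ≤ d x y + d y z := by
  obtain ⟨-, -, htriA⟩ := h.metricOn_left
  obtain ⟨-, -, htriB⟩ := h.metricOn_right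
  rcases hy with hyA | hyB
  · obtain ⟨c, hc, hcyz : d y c + d c z = d y z⟩ := (h.isLeast y hyA z hz).1
    calc d x z ≤ d x c + d c z := (h.isLeast x hx z hz).2 ⟨c, hc, rfl⟩
      _ ≤ d x y + d y c + d c z := by gcongr; exact htriA x hx y hyA c hc.1
      _ = d x y + d y z := by rw [← hcyz, add_assoc]
  · obtain ⟨c, hc, hcxy : d x c + d c y = d x y⟩ := (h.isLeast x hx y hyB).1
    calc d x z ≤ d x c + d c z := (h.isLeast x hx z hz).2 ⟨c, hc, rfl⟩
      _ ≤ d x c + (d c y + d y z) := by gcongr; exact htriB c hc.2 y hyB z hz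
      _ = d x y + d y z := by rw [← hcxy, add_assoc]

theorem triangle_of_ends_mem_left_of_mid_mem_right (h : IsAmalgam d A B) {x y z : X}
    (hx : x ∈ A) (hy : y ∈ B) (hz : z ∈ A) : d x z ≤ d x y + d y z := by
  obtain ⟨-, hsymmA, htriA⟩ := h.metricOn_left
  obtain ⟨-, hsymmB, htriB⟩ := h.metricOn_right
  obtain ⟨c, hc, hcxy : d x c + d c y = d x y⟩ := (h.isLeast x hx y hy).1
  obtain ⟨c', hc', hczy : d z c' + d c' y = d z y⟩ := (h.isLeast z hz y hy).1
  have hyz : d y z = d y c' + d c' z := by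
    rw [← h.comm z hz y hy, ← hczy, hsymmA z hz c' hc'.1, hsymmB c' hc'.2 y hy, add_comm]
  calc d x z ≤ d x c + d c z := htriA x hx c hc.1 z hz
    _ ≤ d x c + (d c c' + d c' z) := by gcongr; exact htriA c hc.1 c' hc'.1 z hz
    _ ≤ d x c + ((d c y + d y c') + d c' z) := by gcongr; exact htriB c hc.2 y hy c' hc'.2
    _ = d x y + d y z := by rw [← hcxy, hyz]; abel

theorem isMetricOn_union (h : IsAmalgam d A B) : IsMetricOn d (A ∪ B) := by
  refine ⟨fun x hx y hy => ?_, fun x hx y hy => ?_, fun x hx y hy z hz => ?_⟩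
  · rcases hx with hxA | hxB <;> rcases hy with hyA | hyB
    · exact h.metricOn_left.1 x hxA y hyA
    · exact h.eq_zero_iff hxA hyB
    · exact h.swap.eq_zero_iff hxB hyA
    · exact h.metricOn_right.1 x hxB y hyB
  · rcases hx with hxA | hxB <;> rcases hy with hyA | hyB
    · exact h.metricOn_left.2.1 x hxA y hyA
    · exact h.comm x hxA y hyB
    · exact h.swap.comm x hxB y hyA
    · exact h.metricOn_right.2.1 x hxB y hyB
  · rcases hx with hxA | hxB <;> rcases hz with hzA | hzB
    · rcases hy with hyA | hyB
      · exact h.metricOn_left.2.2 x hxA y hyA z hzA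
      · exact h.triangle_of_ends_mem_left_of_mid_mem_right hxA hyB hzA
    · exact h.triangle_of_ends_mem_left_right hxA hy hzB
    · exact h.swap.triangle_of_ends_mem_left_right hxB (Set.union_comm A B ▸ hy) hzA
    · rcases hy with hyA | hyB
      · exact h.swap.triangle_of_ends_mem_left_of_mid_mem_right hxB hyA hzB
      · exact h.metricOn_right.2.2 x hxB y hyB z hzB

end IsAmalgam

end

theorem isMetricOn_amalgam_general {X R : Type*} [AddCommGroup R] [LinearOrder R] [IsOrderedAddMonoid R]
    (X₁ X₂ : Set X)
    (d₁ d₂ dcup : X → X → R)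
    (h₁ : IsMetricOn d₁ X₁) (h₂ : IsMetricOn d₂ X₂)
    (hd₁ : ∀ a ∈ X₁, ∀ b ∈ X₁, dcup a b = d₁ a b)
    (hd₂ : ∀ a ∈ X₂, ∀ b ∈ X₂, dcup a b = d₂ a b)
    (hmin : ∀ a ∈ X₁ \ X₂, ∀ b ∈ X₂ \ X₁,
      (∃ c ∈ X₁ ∩ X₂, dcup a b = d₁ a c + d₂ c b) ∧
      (∀ c ∈ X₁ ∩ X₂, dcup a b ≤ d₁ a c + d₂ c b) ∧
      dcup b a = dcup a b) :
    IsMetricOn dcup (X₁ ∪ X₂) ∧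
      (∀ a ∈ X₁, ∀ b ∈ X₁, dcup a b = d₁ a b) ∧
      (∀ a ∈ X₂, ∀ b ∈ X₂, dcup a b = d₂ a b) := by
  refine ⟨IsAmalgam.isMetricOn_union
    (IsAmalgam.of_diff (h₁.congr hd₁) (h₂.congr hd₂) fun a ha b hb => ?_), hd₁, hd₂⟩
  obtain ⟨⟨c, hc, hcab⟩, hle, hsymm⟩ := hmin a ha b hb
  have hroute : ∀ c ∈ X₁ ∩ X₂, dcup a c + dcup c b = d₁ a c + d₂ c b := fun c hc => by
    rw [hd₁ a ha.1 c hc.1, hd₂ c hc.2 b hb.1]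
  refine ⟨hsymm.symm, ⟨c, hc, (hroute c hc).trans hcab.symm⟩, ?_⟩
  exact Set.forall_mem_image.2 fun c hc => (hle c hc).trans_eq (hroute c hc).symm

/-- Amalgamation of two finite `R`-valued metric spaces over their common (nonempty)
intersection, using `d∪(a,b) = min_{c ∈ X₁ ∩ X₂} (d₁(a,c) + d₂(c,b))` for `a ∈ X₁ \ X₂`
and `b ∈ X₂ \ X₁`, yields a metric on the union extending both. -/
theorem isMetricOn_amalgam {X R : Type*} [AddCommGroup R] [LinearOrder R] [IsOrderedAddMonoid R]
    (X₁ X₂ : Set X) (hfin₁ : X₁.Finite) (hfin₂ : X₂.Finite)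
    (hne : (X₁ ∩ X₂).Nonempty)
    (d₁ d₂ dcup : X → X → R)
    (h₁ : IsMetricOn d₁ X₁) (h₂ : IsMetricOn d₂ X₂)
    (hagree : ∀ a ∈ X₁ ∩ X₂, ∀ b ∈ X₁ ∩ X₂, d₁ a b = d₂ a b)
    (hd₁ : ∀ a ∈ X₁, ∀ b ∈ X₁, dcup a b = d₁ a b)
    (hd₂ : ∀ a ∈ X₂, ∀ b ∈ X₂, dcup a b = d₂ a b)
    (hmin : ∀ a ∈ X₁ \ X₂, ∀ b ∈ X₂ \ X₁,
      (∃ c ∈ X₁ ∩ X₂, dcup a b = d₁ a c + d₂ c b) ∧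
      (∀ c ∈ X₁ ∩ X₂, dcup a b ≤ d₁ a c + d₂ c b) ∧
      dcup b a = dcup a b) :
    IsMetricOn dcup (X₁ ∪ X₂) ∧
      (∀ a ∈ X₁, ∀ b ∈ X₁, dcup a b = d₁ a b) ∧
      (∀ a ∈ X₂, ∀ b ∈ X₂, dcup a b = d₂ a b) :=
  isMetricOn_amalgam_general X₁ X₂ d₁ d₂ dcup h₁ h₂ hd₁ hd₂ hmin
end

section
/- Let R be a linearly ordered abelian group, P a set, and f : P² → R a symmetric function (f(p,q) = f(q,p)) with f(p,q) ≥ 0 for all p, q. Suppose δ ∈ R satisfies δ > f(p,q) + f(p',q') for all p, q, p', q' ∈ P and δ > 0. Define d on X = P × {1,2} by: d((p,i),(q,i)) = 0 if p = q; d((p,i),(q,i)) = δ if p ≠ q; and d((p,1),(q,2)) = d((q,2),(p,1)) = f(p,q) + δ. Then d is an R-valued metric on X. -/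
/-!
Every distance between distinct points of the double cover lies in `[δ, 2δ]`: it is `δ` inside a
sheet and `f p q + δ` with `0 ≤ f p q ≤ δ` across the sheets. Any function that vanishes exactly on
the diagonal, is symmetric and takes its off-diagonal values in such an interval `[a, 2a]` with
`a > 0` is a metric, since the sum of two nonzero distances is at least `2a`.
-/

def IsMetric {X R : Type*} [AddCommGroup R] [LinearOrder R] [IsOrderedAddMonoid R] (d : X → X → R) : Prop :=
  (∀ x y, (d x y = 0 ↔ x = y)) ∧ (∀ x y, d x y = d y x) ∧
    (∀ x y z, d x z ≤ d x y + d y z)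

open Set

section

variable {X R : Type*} [AddCommGroup R] [LinearOrder R] [IsOrderedAddMonoid R]

theorem isMetric_of_forall_ne_mem_Icc {d : X → X → R} {a : R} (ha : 0 < a)
    (hdiag : ∀ x, d x x = 0) (hsymm : ∀ x y, d x y = d y x)
    (hIcc : ∀ x y, x ≠ y → d x y ∈ Icc a (a + a)) : IsMetric d := by
  have le_two_a : ∀ x y, d x y ≤ a + a := fun x y => by
    rcases eq_or_ne x y with rfl | hxy
    · exact hdiag x ▸ (add_pos ha ha).le
    · exact (hIcc x y hxy).2
  refine ⟨fun x y => ⟨fun h => ?_, fun h => h ▸ hdiag x⟩, hsymm, fun x y z => ?_⟩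
  · by_contra hxy
    exact ha.not_ge (h ▸ (hIcc x y hxy).1)
  · rcases eq_or_ne x y with rfl | hxy
    · rw [hdiag, zero_add]
    rcases eq_or_ne y z with rfl | hyz
    · rw [hdiag, add_zero]
    exact (le_two_a x z).trans (add_le_add (hIcc x y hxy).1 (hIcc y z hyz).1)

end

section DoubleCover

variable {P R : Type*} {f : P → P → R} {δ : R} {d : P × Fin 2 → P × Fin 2 → R}

theorem doubleCover_symm [Add R] (hsame : ∀ (p q : P) (i : Fin 2), p ≠ q → d (p, i) (q, i) = δ)
    (hcross : ∀ p q : P, d (p, 0) (q, 1) = f p q + δ ∧ d (q, 1) (p, 0) = f p q + δ)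
    (x y : P × Fin 2) : d x y = d y x := by
  have same_sheet : ∀ (p q : P) (i : Fin 2), d (p, i) (q, i) = d (q, i) (p, i) := by
    intro p q i
    rcases eq_or_ne p q with rfl | hpq
    · rfl
    · rw [hsame p q i hpq, hsame q p i hpq.symm]
  obtain ⟨p, i⟩ := x
  obtain ⟨q, j⟩ := y
  match i, j with
  | 0, 0 => exact same_sheet p q 0
  | 0, 1 => exact (hcross p q).1.trans (hcross p q).2.symm
  | 1, 0 => exact (hcross q p).2.trans (hcross q p).1.symm
  | 1, 1 => exact same_sheet p q 1

theorem doubleCover_mem_Icc [AddCommGroup R] [LinearOrder R] [IsOrderedAddMonoid R]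
    (hnonneg : ∀ p q, 0 ≤ f p q) (hle : ∀ p q, f p q ≤ δ)
    (hδ : 0 ≤ δ) (hsame : ∀ (p q : P) (i : Fin 2), p ≠ q → d (p, i) (q, i) = δ)
    (hcross : ∀ p q : P, d (p, 0) (q, 1) = f p q + δ ∧ d (q, 1) (p, 0) = f p q + δ)
    (x y : P × Fin 2) (hxy : x ≠ y) : d x y ∈ Icc δ (δ + δ) := by
  have same_mem : δ ∈ Icc δ (δ + δ) := ⟨le_rfl, le_add_of_nonneg_left hδ⟩
  have cross_mem : ∀ p q, f p q + δ ∈ Icc δ (δ + δ) := fun p q =>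
    ⟨le_add_of_nonneg_left (hnonneg p q), add_le_add_left (hle p q) δ⟩
  obtain ⟨p, i⟩ := x
  obtain ⟨q, j⟩ := y
  have hpq : i = j → p ≠ q := by rintro rfl rfl; exact hxy rfl
  match i, j with
  | 0, 0 => exact hsame p q 0 (hpq rfl) ▸ same_mem
  | 0, 1 => exact (hcross p q).1 ▸ cross_mem p q
  | 1, 0 => exact (hcross q p).2 ▸ cross_mem q p
  | 1, 1 => exact hsame p q 1 (hpq rfl) ▸ same_mem

end DoubleCover

theorem isMetric_double_cover_general {P R : Type*} [AddCommGroup R] [LinearOrder R] [IsOrderedAddMonoid R]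
    (f : P → P → R) (hnonneg : ∀ p q, 0 ≤ f p q)
    (δ : R) (hδpos : 0 < δ)
    (hδbig : ∀ p q p' q', f p q + f p' q' < δ)
    (d : P × Fin 2 → P × Fin 2 → R)
    (hdiag : ∀ x : P × Fin 2, d x x = 0)
    (hsame : ∀ (p q : P) (i : Fin 2), p ≠ q → d (p, i) (q, i) = δ)
    (hcross : ∀ p q : P, d (p, 0) (q, 1) = f p q + δ ∧ d (q, 1) (p, 0) = f p q + δ) :
    IsMetric d := by
  have hle : ∀ p q, f p q ≤ δ := fun p q =>
    (le_add_of_nonneg_right (hnonneg q q)).trans (hδbig p q q q).le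
  exact isMetric_of_forall_ne_mem_Icc hδpos hdiag (doubleCover_symm hsame hcross)
    (doubleCover_mem_Icc hnonneg hle hδpos.le hsame hcross)

/-- Given a symmetric nonnegative `f : P² → R` and `δ` with `δ > f(p,q) + f(p',q')`
for all `p,q,p',q'` and `δ > 0`, the function on `X = P × {1,2}` given by `0` on the
diagonal, `δ` within each copy, and `f(p,q) + δ` across the copies, is an `R`-valued
metric. -/
theorem isMetric_double_cover {P R : Type*} [AddCommGroup R] [LinearOrder R] [IsOrderedAddMonoid R]
    (f : P → P → R) (hsymm : ∀ p q, f p q = f q p) (hnonneg : ∀ p q, 0 ≤ f p q)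
    (δ : R) (hδpos : 0 < δ)
    (hδbig : ∀ p q p' q', f p q + f p' q' < δ)
    (d : P × Fin 2 → P × Fin 2 → R)
    (hdiag : ∀ x : P × Fin 2, d x x = 0)
    (hsame : ∀ (p q : P) (i : Fin 2), p ≠ q → d (p, i) (q, i) = δ)
    (hcross : ∀ p q : P, d (p, 0) (q, 1) = f p q + δ ∧ d (q, 1) (p, 0) = f p q + δ) :
    IsMetric d :=
  isMetric_double_cover_general f hnonneg δ hδpos hδbig d hdiag hsame hcross
end

section
/- Let L be a language consisting only of relation symbols of arity at most 2, and let M be an L-structure with quantifier elimination. Let A ⊆ M, let p₁(x₁), …, p_k(x_k) be complete 1-types over A realized in M, and let φ(x₁,…,x_k) be an L(A)-formula. Then there is an L-formula φ*(x₁,…,x_k) without parameters such that for all tuples (a₁,…,a_k) with aᵢ realizing pᵢ, M ⊨ φ(a₁,…,a_k) ↔ φ*(a₁,…,a_k). -/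
open FirstOrder FirstOrder.Language

/-!
Replace the parameters from `A` by extra variables and eliminate quantifiers: `φ` becomes a
boolean combination of atomic formulas. In a relational language of arity at most two an
atomic formula has at most two free variables. If none of them is a parameter it is already a
parameter-free formula in the `xᵢ`; otherwise at most one `xᵢ` occurs in it, alongside
parameters, so its truth value at a tuple realizing the `pᵢ` is decided by the type `pᵢ` alone
and it may be replaced by `⊤` or `⊥`.
-/

namespace FirstOrder.Language

variable {L : Language} {M : Type*} [L.Structure M]

theorem Term.card_varFinsetLeft_le_one [L.IsRelational] {α β : Type*} [DecidableEq α]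
    (t : L.Term (α ⊕ β)) : t.varFinsetLeft.card ≤ 1 := by
  cases t with
  | var v => cases v <;> simp [varFinsetLeft]
  | func f _ => exact isEmptyElim f

namespace BoundedFormula

open Finset

theorem realize_congr_of_eqOn_freeVarFinset {α : Type*} [DecidableEq α] {n : ℕ}
    {φ : L.BoundedFormula α n} {v w : α → M} (h : ∀ x ∈ φ.freeVarFinset, v x = w x)
    {xs : Fin n → M} : φ.Realize v xs ↔ φ.Realize w xs := by
  rw [← realize_restrictFreeVar (f := id) (v := v ∘ Subtype.val) v (fun _ => rfl),
    ← realize_restrictFreeVar (f := id) (v := v ∘ Subtype.val) w (fun x => h x x.2)]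

theorem IsAtomic.card_freeVarFinset_le_two [L.IsRelational]
    (hrel : ∀ n, 2 < n → IsEmpty (L.Relations n)) {α : Type*} [DecidableEq α] {n : ℕ}
    {φ : L.BoundedFormula α n} (h : φ.IsAtomic) : φ.freeVarFinset.card ≤ 2 := by
  cases h with
  | equal t₁ t₂ =>
    calc _ ≤ _ := card_union_le _ _
      _ ≤ 1 + 1 := add_le_add t₁.card_varFinsetLeft_le_one t₂.card_varFinsetLeft_le_one
  | @rel l R ts =>
    have hl : l ≤ 2 := by
      by_contra! hl
      exact (hrel l hl).false R
    calc _ ≤ ∑ i, (ts i).varFinsetLeft.card := card_biUnion_le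
      _ ≤ ∑ _i : Fin l, 1 := sum_le_sum fun i _ => (ts i).card_varFinsetLeft_le_one
      _ ≤ 2 := by simpa using hl

end BoundedFormula

namespace Formula

theorem exists_isQF_realize_iff
    (hQE : ∀ (n : ℕ) (φ : L.Formula (Fin n)), ∃ ψ : L.Formula (Fin n),
      ψ.IsQF ∧ ∀ v : Fin n → M, φ.Realize v ↔ ψ.Realize v)
    {α : Type*} (φ : L.Formula α) :
    ∃ ψ : L.Formula α, ψ.IsQF ∧ ∀ v : α → M, φ.Realize v ↔ ψ.Realize v := by
  classical
  let e := φ.freeVarFinset.equivFin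
  obtain ⟨ψ, hψ, hφψ⟩ := hQE _ (relabel e (φ.restrictFreeVar id))
  refine ⟨ψ.relabel ((↑) ∘ e.symm), hψ.relabel _, fun v => ?_⟩
  rw [Formula.realize_relabel, ← hφψ, Formula.realize_relabel]
  exact (BoundedFormula.realize_restrictFreeVar v (by simp)).symm

theorem exists_realize_sumElim_iff_of_forall_isRight {α β : Type*} [DecidableEq α]
    [DecidableEq β] {χ : L.Formula (α ⊕ β)} (hχ : ∀ x ∈ χ.freeVarFinset, x.isRight) :
    ∃ χ' : L.Formula β, ∀ (v : α → M) (w : β → M),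
      χ.Realize (Sum.elim v w) ↔ χ'.Realize w :=
  ⟨χ.restrictFreeVar fun x => x.1.getRight (hχ x x.2), fun v w =>
    (BoundedFormula.realize_restrictFreeVar _ fun x => by
      obtain ⟨_ | _, hx⟩ := x
      · simpa using hχ _ hx
      · rfl).symm⟩

end Formula

def SameTypeOver (L : Language) [L.Structure M] (A : Set M) (x y : M) : Prop :=
  ∀ θ : L[[A]].Formula (Fin 1), θ.Realize (fun _ => x) ↔ θ.Realize (fun _ => y)

variable {A : Set M}

theorem BoundedFormula.realize_constantsVarsEquiv_sumElim {β : Type*} {n : ℕ}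
    (φ : L[[A]].BoundedFormula β n) (v : β → M) (xs : Fin n → M) :
    (constantsVarsEquiv φ).Realize (Sum.elim (↑) v) xs ↔ φ.Realize v xs := by
  rw [← BoundedFormula.realize_constantsVarsEquiv]
  simp only [coe_con]

theorem SameTypeOver.realize_iff {x y : M} (hxy : L.SameTypeOver A x y) {β : Type*}
    (ψ : L.Formula (A ⊕ β)) :
    ψ.Realize (Sum.elim (↑) fun _ => x) ↔ ψ.Realize (Sum.elim (↑) fun _ => y) := by
  obtain ⟨θ, hθψ⟩ : ∃ θ : L[[A]].Formula (Fin 1),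
      BoundedFormula.constantsVarsEquiv θ = ψ.relabel (Sum.map id fun _ => 0) :=
    BoundedFormula.constantsVarsEquiv.surjective _
  have hθ (z : M) : θ.Realize (fun _ => z) ↔ ψ.Realize (Sum.elim (↑) fun _ => z) := by
    rw [Formula.Realize, ← BoundedFormula.realize_constantsVarsEquiv_sumElim, hθψ,
      ← Formula.Realize, Formula.realize_relabel]
    congr!
    ext (_ | _) <;> rfl
  rw [← hθ, ← hθ]
  exact hxy θ

theorem Formula.realize_iff_of_sameTypeOver [DecidableEq A] {k : ℕ} {a c : Fin k → M}
    (hac : ∀ i, L.SameTypeOver A (a i) (c i)) {χ : L.Formula (A ⊕ Fin k)}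
    (hχ : ∀ i j, Sum.inr i ∈ χ.freeVarFinset → Sum.inr j ∈ χ.freeVarFinset → i = j) :
    χ.Realize (Sum.elim (↑) a) ↔ χ.Realize (Sum.elim (↑) c) := by
  by_cases hi : ∃ i, Sum.inr i ∈ χ.freeVarFinset
  · obtain ⟨i, hi⟩ := hi
    -- only the `i`-th coordinate is read, so `b` may be replaced by the constant tuple `b i`
    have hconst (b : Fin k → M) :
        χ.Realize (Sum.elim (↑) b) ↔ χ.Realize (Sum.elim (↑) fun _ => b i) :=
      BoundedFormula.realize_congr_of_eqOn_freeVarFinset fun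
        | .inl _, _ => rfl
        | .inr j, hj => by rw [hχ j i hj hi]; rfl
    rw [hconst a, hconst c]
    exact (hac i).realize_iff χ
  · push Not at hi
    exact BoundedFormula.realize_congr_of_eqOn_freeVarFinset fun
      | .inl _, _ => rfl
      | .inr j, hj => (hi j hj).elim

theorem BoundedFormula.IsAtomic.exists_formula_realize_iff_of_sameTypeOver [L.IsRelational]
    (hrel : ∀ n, 2 < n → IsEmpty (L.Relations n)) {k : ℕ} (c : Fin k → M)
    {χ : L.Formula (A ⊕ Fin k)} (hχ : χ.IsAtomic) :
    ∃ χ' : L.Formula (Fin k), ∀ a : Fin k → M, (∀ i, L.SameTypeOver A (a i) (c i)) →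
      (χ.Realize (Sum.elim (↑) a) ↔ χ'.Realize a) := by
  classical
  by_cases hright : ∀ x ∈ χ.freeVarFinset, x.isRight
  · obtain ⟨χ', hχ'⟩ := Formula.exists_realize_sumElim_iff_of_forall_isRight (M := M) hright
    exact ⟨χ', fun a _ => hχ' _ a⟩
  · -- a parameter occupies one of the at most two free variables, leaving room for one coordinate
    obtain ⟨p, hp⟩ : ∃ p, Sum.inl p ∈ χ.freeVarFinset := by
      push Not at hright
      obtain ⟨_ | _, hx, hx'⟩ := hright
      exacts [⟨_, hx⟩, absurd rfl hx']
    have hone (i j : Fin k) (hi : Sum.inr i ∈ χ.freeVarFinset)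
        (hj : Sum.inr j ∈ χ.freeVarFinset) : i = j := by
      by_contra hij
      have hsub : {Sum.inl p, Sum.inr i, Sum.inr j} ⊆ χ.freeVarFinset := by
        simp [Finset.insert_subset_iff, hp, hi, hj]
      have := (Finset.card_le_card hsub).trans (hχ.card_freeVarFinset_le_two hrel)
      simp [Finset.card_insert_of_notMem, hij] at this
    refine ⟨if χ.Realize (Sum.elim (↑) c) then ⊤ else ⊥, fun a ha => ?_⟩
    rw [Formula.realize_iff_of_sameTypeOver ha hone]
    split_ifs with h <;> simp [h]

theorem BoundedFormula.IsQF.exists_formula_realize_iff_of_sameTypeOver [L.IsRelational]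
    (hrel : ∀ n, 2 < n → IsEmpty (L.Relations n)) {k : ℕ} (c : Fin k → M)
    {χ : L.Formula (A ⊕ Fin k)} (hχ : χ.IsQF) :
    ∃ χ' : L.Formula (Fin k), ∀ a : Fin k → M, (∀ i, L.SameTypeOver A (a i) (c i)) →
      (χ.Realize (Sum.elim (↑) a) ↔ χ'.Realize a) := by
  induction hχ with
  | falsum => exact ⟨⊥, fun _ _ => Iff.rfl⟩
  | of_isAtomic h => exact h.exists_formula_realize_iff_of_sameTypeOver hrel c
  | imp _ _ ih₁ ih₂ =>
    obtain ⟨χ₁, h₁⟩ := ih₁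
    obtain ⟨χ₂, h₂⟩ := ih₂
    exact ⟨χ₁.imp χ₂, fun a ha => imp_congr (h₁ a ha) (h₂ a ha)⟩

end FirstOrder.Language

/-- Let `L` be a relational language all of whose relation symbols have arity at most
`2`, and let `M` be an `L`-structure with quantifier elimination.  Let `A ⊆ M`, let
`p₁, …, p_k` be complete 1-types over `A` realized in `M` (represented by realizations
`c 1, …, c k`), and let `φ(x₁,…,x_k)` be an `L(A)`-formula.  Then there is an
`L`-formula `φ*` without parameters such that `φ` and `φ*` agree on every tuple
`(a₁,…,a_k)` with each `aᵢ` realizing `pᵢ`. -/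
theorem binary_qe_type_determined {L : FirstOrder.Language}
    (hfun : ∀ n, IsEmpty (L.Functions n))
    (hrel : ∀ n, 2 < n → IsEmpty (L.Relations n))
    {M : Type*} [L.Structure M]
    (hQE : ∀ (n : ℕ) (φ : L.Formula (Fin n)), ∃ ψ : L.Formula (Fin n),
      ψ.IsQF ∧ ∀ v : Fin n → M, φ.Realize v ↔ ψ.Realize v)
    (A : Set M) (k : ℕ) (c : Fin k → M)
    (φ : (L[[A]]).Formula (Fin k)) :
    ∃ φstar : L.Formula (Fin k), ∀ a : Fin k → M,
      (∀ i : Fin k, ∀ θ : (L[[A]]).Formula (Fin 1),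
        (θ.Realize (fun _ => a i) ↔ θ.Realize (fun _ => c i))) →
      (φ.Realize a ↔ φstar.Realize a) := by
  have : L.IsRelational := hfun
  obtain ⟨ψ, hψ, hφψ⟩ :=
    Formula.exists_isQF_realize_iff hQE (BoundedFormula.constantsVarsEquiv φ)
  obtain ⟨φstar, hφstar⟩ := hψ.exists_formula_realize_iff_of_sameTypeOver hrel c
  refine ⟨φstar, fun a ha => ?_⟩
  rw [← hφstar a ha, ← hφψ]
  exact (BoundedFormula.realize_constantsVarsEquiv_sumElim φ a default).symm
end
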